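/- For any continuous distribution function F on ℝ with i.i.d. sample X_1,…,X_n having empirical distribution function F_n, the distribution of the Kolmogorov distance sup_x |F_n(x) − F(x)| does not depend on F. -/

import Mathlib

open Set MeasureTheory ProbabilityTheory Finset

open Filter Topology

/-!
If `Q` is the quantile function of `F`, then `Q u ≤ x ↔ u ≤ F x` for `u ∈ (0,1)`. Hence an i.i.d.
sample from `μ` has the law of `Q(U₁), …, Q(Uₙ)` for an i.i.d. uniform sample `U` on `(0,1)`, and
then `Fₙ(x) = Gₙ(F x)` with `Gₙ` the empirical distribution function of `U`. So the statistic is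
`sup_{t ∈ F(ℝ)} |Gₙ(t) − t|`. For continuous `F` the range `F(ℝ)` is `(0,1)` plus possibly the
endpoints, where `|Gₙ(t) − t|` vanishes, so the statistic is `sup_{0<t<1} |Gₙ(t) − t|` whatever
`F` is.
The statistic is measurable since `x ↦ |Fₙ(x) − F(x)|` is right-continuous, so the supremum may
be taken over rational `x`.
-/

noncomputable section

-- Outside `(0,1)` the set is empty or unbounded below, and `sInf` returns the junk value `0`.
def quantile (μ : Measure ℝ) (u : ℝ) : ℝ := sInf {x | u ≤ cdf μ x}

def uniformIoo : Measure ℝ := volume.restrict (Set.Ioo 0 1)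

instance : IsProbabilityMeasure uniformIoo := ⟨by simp [uniformIoo, Real.volume_Ioo]⟩

section Quantile

variable (μ : Measure ℝ)

theorem quantile_le_iff {u : ℝ} (hu : u ∈ Set.Ioo 0 1) (x : ℝ) :
    quantile μ u ≤ x ↔ u ≤ cdf μ x := by
  set S := {x | u ≤ cdf μ x}
  have hne : S.Nonempty := ((tendsto_cdf_atTop μ).eventually (eventually_ge_nhds hu.2)).exists
  have hbdd : BddBelow S := by
    obtain ⟨a, ha⟩ := ((tendsto_cdf_atBot μ).eventually (eventually_lt_nhds hu.1)).exists
    exact ⟨a, fun y hy => not_lt.1 fun hya => (hy.trans (monotone_cdf μ hya.le)).not_gt ha⟩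
  have hmem : sInf S ∈ S := by
    refine ge_of_tendsto ((cdf μ).right_continuous _ |>.mono Ioi_subset_Ici_self) ?_
    filter_upwards [self_mem_nhdsWithin] with y hy
    obtain ⟨s, hs, hsy⟩ := exists_lt_of_csInf_lt hne hy
    exact hs.trans (monotone_cdf μ hsy.le)
  exact ⟨fun h => hmem.trans (monotone_cdf μ h), fun h => csInf_le hbdd h⟩

theorem monotoneOn_quantile : MonotoneOn (quantile μ) (Set.Ioo 0 1) := fun _ hu _ hv huv =>
  (quantile_le_iff μ hu _).2 (huv.trans ((quantile_le_iff μ hv _).1 le_rfl))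

theorem aemeasurable_quantile : AEMeasurable (quantile μ) uniformIoo :=
  aemeasurable_restrict_of_monotoneOn measurableSet_Ioo (monotoneOn_quantile μ)

theorem uniformIoo_Iic {a : ℝ} (ha : a ≤ 1) : uniformIoo (Iic a) = ENNReal.ofReal a := by
  rw [uniformIoo, Measure.restrict_congr_set Ioo_ae_eq_Ioc,
    Measure.restrict_apply measurableSet_Iic, Set.Iic_inter_Ioc_of_le ha, Real.volume_Ioc, sub_zero]

theorem map_quantile_uniformIoo [IsProbabilityMeasure μ] : uniformIoo.map (quantile μ) = μ := by
  refine Measure.ext_of_Iic _ μ fun x => ?_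
  rw [Measure.map_apply_of_aemeasurable (aemeasurable_quantile μ) measurableSet_Iic]
  have hpre : quantile μ ⁻¹' Iic x =ᵐ[uniformIoo] Iic (cdf μ x) := by
    filter_upwards [ae_restrict_mem measurableSet_Ioo] with u hu
    exact propext (quantile_le_iff μ hu x)
  rw [measure_congr hpre, uniformIoo_Iic (cdf_le_one μ x), ofReal_cdf]

end Quantile

theorem Ioo_subset_range_cdf (μ : Measure ℝ) (hμ : Continuous (cdf μ)) :
    Set.Ioo 0 1 ⊆ range (cdf μ) := fun _ hu =>
  mem_range_of_exists_le_of_exists_ge hμ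
    ((tendsto_cdf_atBot μ).eventually (eventually_le_nhds hu.1)).exists
    ((tendsto_cdf_atTop μ).eventually (eventually_ge_nhds hu.2)).exists

theorem iSup_eq_iSup_ratCast {f : ℝ → ℝ} (hf : ∀ x, ContinuousWithinAt f (Ici x) x)
    (hbdd : BddAbove (range f)) : ⨆ x, f x = ⨆ q : ℚ, f q := by
  refine le_antisymm (ciSup_le fun x => ?_) (ciSup_le fun q => le_ciSup hbdd _)
  obtain ⟨u, -, hxu, hu⟩ := Real.exists_seq_rat_strictAnti_tendsto x
  have hu' : Tendsto (fun k => (u k : ℝ)) atTop (𝓝[≥] x) :=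
    tendsto_nhdsWithin_iff.2 ⟨hu, Eventually.of_forall fun k => (hxu k).le⟩
  exact le_of_tendsto' ((hf x).tendsto.comp hu')
    fun k => le_ciSup (hbdd.mono (range_comp_subset_range _ f)) (u k)

section Empirical

variable {n : ℕ}

def empiricalCDF (v : Fin n → ℝ) (x : ℝ) : ℝ := ((univ.filter fun i => v i ≤ x).card : ℝ) / n

def kolmogorovStat (F : ℝ → ℝ) (v : Fin n → ℝ) : ℝ := ⨆ x, |empiricalCDF v x - F x|

def uniformKolmogorovStat (v : Fin n → ℝ) : ℝ := ⨆ t : Set.Ioo (0 : ℝ) 1, |empiricalCDF v t - t|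

theorem empiricalCDF_nonneg (v : Fin n → ℝ) (x : ℝ) : 0 ≤ empiricalCDF v x := by
  unfold empiricalCDF; positivity

theorem empiricalCDF_le_one (v : Fin n → ℝ) (x : ℝ) : empiricalCDF v x ≤ 1 :=
  div_le_one_of_le₀ (by exact_mod_cast card_le_univ _ |>.trans_eq (Fintype.card_fin n))
    n.cast_nonneg

theorem abs_empiricalCDF_sub_le_one (v : Fin n → ℝ) {x t : ℝ} (h0 : 0 ≤ t) (h1 : t ≤ 1) :
    |empiricalCDF v x - t| ≤ 1 :=
  abs_sub_le_of_nonneg_of_le (empiricalCDF_nonneg v x) (empiricalCDF_le_one v x) h0 h1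

theorem empiricalCDF_eventuallyEq_nhdsGE (v : Fin n → ℝ) (x : ℝ) :
    empiricalCDF v =ᶠ[𝓝[≥] x] fun _ => empiricalCDF v x := by
  have hstable : ∀ i, ∀ᶠ y in 𝓝[≥] x, (v i ≤ y ↔ v i ≤ x) := fun i => by
    rcases le_or_gt (v i) x with hi | hi
    · filter_upwards [self_mem_nhdsWithin] with y hy using iff_of_true (hi.trans hy) hi
    · filter_upwards [nhdsWithin_le_nhds (eventually_lt_nhds hi)] with y hy
        using iff_of_false hy.not_ge hi.not_ge
  filter_upwards [eventually_all.2 hstable] with y hy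
  simp only [empiricalCDF, hy]

theorem continuousWithinAt_empiricalCDF (v : Fin n → ℝ) (x : ℝ) :
    ContinuousWithinAt (empiricalCDF v) (Ici x) x :=
  tendsto_const_nhds.congr' (empiricalCDF_eventuallyEq_nhdsGE v x).symm

theorem measurable_empiricalCDF (x : ℝ) : Measurable fun v : Fin n → ℝ => empiricalCDF v x := by
  simp only [empiricalCDF, card_filter, Nat.cast_sum, Nat.cast_ite, Nat.cast_one, Nat.cast_zero]
  exact (Finset.measurable_sum _ fun i _ => Measurable.ite
    (measurableSet_le (measurable_pi_apply i) measurable_const) measurable_const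
    measurable_const).div_const _

theorem measurable_kolmogorovStat {F : ℝ → ℝ} (hF : ∀ x, ContinuousWithinAt F (Ici x) x)
    (hF0 : ∀ x, 0 ≤ F x) (hF1 : ∀ x, F x ≤ 1) :
    Measurable (kolmogorovStat (n := n) F) := by
  have hrat : kolmogorovStat F = fun v : Fin n → ℝ => ⨆ q : ℚ, |empiricalCDF v q - F q| :=
    funext fun v => iSup_eq_iSup_ratCast
      (fun x => ((continuousWithinAt_empiricalCDF v x).sub (hF x)).abs)
      ⟨1, forall_mem_range.2 fun x => abs_empiricalCDF_sub_le_one v (hF0 x) (hF1 x)⟩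
  rw [hrat]
  exact .iSup fun q => ((measurable_empiricalCDF _).sub_const _).abs

theorem empiricalCDF_quantile_comp (μ : Measure ℝ) {w : Fin n → ℝ}
    (hw : ∀ i, w i ∈ Set.Ioo 0 1) (x : ℝ) :
    empiricalCDF (fun i => quantile μ (w i)) x = empiricalCDF w (cdf μ x) := by
  simp only [empiricalCDF, quantile_le_iff μ (hw _)]

theorem empiricalCDF_zero {w : Fin n → ℝ} (hw : ∀ i, w i ∈ Set.Ioo 0 1) :
    empiricalCDF w 0 = 0 := by
  simp [empiricalCDF, fun i => (hw i).1.not_ge]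

theorem empiricalCDF_one (hn : 0 < n) {w : Fin n → ℝ} (hw : ∀ i, w i ∈ Set.Ioo 0 1) :
    empiricalCDF w 1 = 1 := by
  simp [empiricalCDF, fun i => (hw i).2.le, hn.ne']

theorem iSup_abs_empiricalCDF_comp_sub (hn : 0 < n) {F : ℝ → ℝ} (hF0 : ∀ x, 0 ≤ F x)
    (hF1 : ∀ x, F x ≤ 1) (hrange : Set.Ioo 0 1 ⊆ range F)
    {w : Fin n → ℝ} (hw : ∀ i, w i ∈ Set.Ioo 0 1) :
    ⨆ x, |empiricalCDF w (F x) - F x| = uniformKolmogorovStat w := by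
  have hbdd : BddAbove (range fun t : Set.Ioo (0 : ℝ) 1 => |empiricalCDF w t - t|) :=
    ⟨1, forall_mem_range.2 fun t => abs_empiricalCDF_sub_le_one w t.2.1.le t.2.2.le⟩
  have hnonneg : 0 ≤ uniformKolmogorovStat w := Real.iSup_nonneg fun _ => abs_nonneg _
  refine le_antisymm (Real.iSup_le (fun x => ?_) hnonneg) (Real.iSup_le (fun t => ?_) ?_)
  · rcases (hF0 x).eq_or_lt with h0 | h0
    · simpa [← h0, empiricalCDF_zero hw] using hnonneg
    rcases (hF1 x).eq_or_lt with h1 | h1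
    · simpa [h1, empiricalCDF_one hn hw] using hnonneg
    exact le_ciSup hbdd ⟨F x, h0, h1⟩
  · obtain ⟨x, hx⟩ := hrange t.2
    refine le_ciSup_of_le ⟨1, forall_mem_range.2 fun x => ?_⟩ x (by rw [hx])
    exact abs_empiricalCDF_sub_le_one w (hF0 x) (hF1 x)
  · exact Real.iSup_nonneg fun _ => abs_nonneg _

theorem kolmogorovStat_cdf_quantile_comp (hn : 0 < n) (μ : Measure ℝ) (hμ : Continuous (cdf μ))
    {w : Fin n → ℝ} (hw : ∀ i, w i ∈ Set.Ioo 0 1) :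
    kolmogorovStat (cdf μ) (fun i => quantile μ (w i)) = uniformKolmogorovStat w := by
  simp only [kolmogorovStat, empiricalCDF_quantile_comp μ hw]
  exact iSup_abs_empiricalCDF_comp_sub hn (cdf_nonneg μ) (cdf_le_one μ)
    (Ioo_subset_range_cdf μ hμ) hw

theorem map_kolmogorovStat_eq_map_uniformKolmogorovStat {Ω : Type*} [MeasurableSpace Ω]
    (P : Measure Ω) [IsProbabilityMeasure P] (hn : 0 < n)
    (μ : Measure ℝ) [IsProbabilityMeasure μ] (hμ : Continuous (cdf μ))
    (X : Fin n → Ω → ℝ) (hX : iIndepFun X P) (hXlaw : ∀ i, P.map (X i) = μ) :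
    P.map (fun ω => kolmogorovStat (cdf μ) fun i => X i ω)
      = (Measure.pi fun _ : Fin n => uniformIoo).map uniformKolmogorovStat := by
  have hXm : ∀ i, AEMeasurable (X i) P := fun i =>
    .of_map_ne_zero (by simp [hXlaw, IsProbabilityMeasure.ne_zero])
  have hQm : AEMeasurable (fun (w : Fin n → ℝ) i => quantile μ (w i))
      (Measure.pi fun _ => uniformIoo) := aemeasurable_pi_lambda _ fun i =>
    (aemeasurable_quantile μ).comp_quasiMeasurePreserving (Measure.quasiMeasurePreserving_eval _ i)
  have hlaw : P.map (fun ω i => X i ω) = Measure.pi fun _ => μ := by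
    simpa [hXlaw] using hX.map_fun_eq_pi_map hXm
  have hsample : (Measure.pi fun _ : Fin n => uniformIoo).map (fun w i => quantile μ (w i))
      = Measure.pi fun _ => μ := by
    simpa [map_quantile_uniformIoo] using Measure.pi_map_pi
      (hμ := fun _ => by rw [map_quantile_uniformIoo]; infer_instance)
      fun _ => aemeasurable_quantile μ
  have hstat : AEMeasurable (kolmogorovStat (n := n) (cdf μ)) (Measure.pi fun _ => μ) :=
    (measurable_kolmogorovStat (cdf μ).right_continuous (cdf_nonneg μ) (cdf_le_one μ)).aemeasurable
  have hae : ∀ᵐ w ∂(Measure.pi fun _ : Fin n => uniformIoo), ∀ i, w i ∈ Set.Ioo 0 1 :=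
    eventually_all.2 fun _ =>
      Measure.tendsto_eval_ae_ae.eventually (ae_restrict_mem measurableSet_Ioo)
  calc P.map (fun ω => kolmogorovStat (cdf μ) fun i => X i ω)
      = (Measure.pi fun _ => μ).map (kolmogorovStat (cdf μ)) := by
        rw [← hlaw, AEMeasurable.map_map_of_aemeasurable (hlaw ▸ hstat)
          (aemeasurable_pi_lambda _ hXm)]
        rfl
    _ = (Measure.pi fun _ => uniformIoo).map
          fun w => kolmogorovStat (cdf μ) fun i => quantile μ (w i) := by
        rw [← hsample, AEMeasurable.map_map_of_aemeasurable (hsample ▸ hstat) hQm]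
        rfl
    _ = _ := Measure.map_congr (hae.mono fun _ hw => kolmogorovStat_cdf_quantile_comp hn μ hμ hw)

end Empirical

end

theorem kolmogorov_statistic_distribution_free_general
    {Ω : Type*} [MeasurableSpace Ω] (P : Measure Ω) [IsProbabilityMeasure P]
    (n : ℕ) (hn : 0 < n)
    (μ ν : Measure ℝ) [IsProbabilityMeasure μ] [IsProbabilityMeasure ν]
    (F G : ℝ → ℝ)
    (hF : ∀ x, F x = (μ (Set.Iic x)).toReal) (hG : ∀ x, G x = (ν (Set.Iic x)).toReal)
    (hFc : Continuous F) (hGc : Continuous G)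
    (X Y : Fin n → Ω → ℝ)
    (hX : iIndepFun X P)
    (hY : iIndepFun Y P)
    (hXlaw : ∀ i, P.map (X i) = μ) (hYlaw : ∀ i, P.map (Y i) = ν) :
    P.map (fun ω => ⨆ x : ℝ,
        |((univ.filter fun i => X i ω ≤ x).card : ℝ) / n - F x|)
      = P.map (fun ω => ⨆ x : ℝ,
        |((univ.filter fun i => Y i ω ≤ x).card : ℝ) / n - G x|) := by
  obtain rfl : F = cdf μ := funext fun x => (hF x).trans (cdf_eq_real μ x).symm
  obtain rfl : G = cdf ν := funext fun x => (hG x).trans (cdf_eq_real ν x).symm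
  exact (map_kolmogorovStat_eq_map_uniformKolmogorovStat P hn μ hFc X hX hXlaw).trans
    (map_kolmogorovStat_eq_map_uniformKolmogorovStat P hn ν hGc Y hY hYlaw).symm

/-- the law of the Kolmogorov statistic `sup_x |Fₙ(x) − F(x)|` of an i.i.d.
sample of size `n` with continuous distribution function `F` does not depend on `F`:
for any two continuous distribution functions `F`, `G` (of laws `μ`, `ν`) and i.i.d.
samples `X`, `Y`, the pushforward laws of the statistics coincide. -/
theorem kolmogorov_statistic_distribution_free
    {Ω : Type*} [MeasurableSpace Ω] (P : Measure Ω) [IsProbabilityMeasure P]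
    (n : ℕ) (hn : 0 < n)
    (μ ν : Measure ℝ) [IsProbabilityMeasure μ] [IsProbabilityMeasure ν]
    (F G : ℝ → ℝ)
    (hF : ∀ x, F x = (μ (Set.Iic x)).toReal) (hG : ∀ x, G x = (ν (Set.Iic x)).toReal)
    (hFc : Continuous F) (hGc : Continuous G)
    (X Y : Fin n → Ω → ℝ)
    (hXm : ∀ i, Measurable (X i)) (hYm : ∀ i, Measurable (Y i))
    (hX : iIndepFun X P)
    (hY : iIndepFun Y P)
    (hXlaw : ∀ i, P.map (X i) = μ) (hYlaw : ∀ i, P.map (Y i) = ν) :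
    P.map (fun ω => ⨆ x : ℝ,
        |((univ.filter fun i => X i ω ≤ x).card : ℝ) / n - F x|)
      = P.map (fun ω => ⨆ x : ℝ,
        |((univ.filter fun i => Y i ω ≤ x).card : ℝ) / n - G x|) :=
  kolmogorov_statistic_distribution_free_general P n hn μ ν F G hF hG hFc hGc X Y hX hY hXlaw hYlaw
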